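/- arXiv:1703.03947 — 3 statements merged into one kernel-verified Lean document; each statement's English description precedes it below -/
import Mathlib

section
/- In genus 2, the derivation 𝓛₁ of ℂ[x₂, x₃, x₄, y₄, y₅, y₆] given by 𝓛₁(x₂)=x₃, 𝓛₁(x₃)=x₄, 𝓛₁(x₄)=4(3x₂x₃+y₅), 𝓛₁(y₄)=y₅, 𝓛₁(y₅)=y₆, 𝓛₁(y₆)=4(2x₂y₅+x₃y₄) annihilates all four polynomials λ₄ = -3x₂² + (1/2)x₄ - 2y₄, λ₆ = 2x₂³ + (1/4)x₃² - (1/2)x₂x₄ - 2x₂y₄ + (1/2)y₆, λ₈ = (4x₂² + y₄)y₄ - (1/2)(x₄y₄ - x₃y₅ + x₂y₆), λ₁₀ = 2x₂y₄² + (1/4)y₅² - (1/2)y₄y₆. -/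
open MvPolynomial

noncomputable abbrev x2 : MvPolynomial (Fin 6) ℂ := X 0
noncomputable abbrev x3 : MvPolynomial (Fin 6) ℂ := X 1
noncomputable abbrev x4 : MvPolynomial (Fin 6) ℂ := X 2
noncomputable abbrev y4 : MvPolynomial (Fin 6) ℂ := X 3
noncomputable abbrev y5 : MvPolynomial (Fin 6) ℂ := X 4
noncomputable abbrev y6 : MvPolynomial (Fin 6) ℂ := X 5

/-- `λ₄ = -3x₂² + (1/2)x₄ - 2y₄`. -/
noncomputable def pl4 : MvPolynomial (Fin 6) ℂ := -3 * x2 ^ 2 + (1 / 2 : ℂ) • x4 - 2 * y4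

/-- `λ₆ = 2x₂³ + (1/4)x₃² - (1/2)x₂x₄ - 2x₂y₄ + (1/2)y₆`. -/
noncomputable def pl6 : MvPolynomial (Fin 6) ℂ :=
  2 * x2 ^ 3 + (1 / 4 : ℂ) • x3 ^ 2 - (1 / 2 : ℂ) • (x2 * x4) - 2 * x2 * y4 + (1 / 2 : ℂ) • y6

/-- `λ₈ = (4x₂² + y₄)y₄ - (1/2)(x₄y₄ - x₃y₅ + x₂y₆)`. -/
noncomputable def pl8 : MvPolynomial (Fin 6) ℂ :=
  (4 * x2 ^ 2 + y4) * y4 - (1 / 2 : ℂ) • (x4 * y4 - x3 * y5 + x2 * y6)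

/-- `λ₁₀ = 2x₂y₄² + (1/4)y₅² - (1/2)y₄y₆`. -/
noncomputable def pl10 : MvPolynomial (Fin 6) ℂ :=
  2 * x2 * y4 ^ 2 + (1 / 4 : ℂ) • y5 ^ 2 - (1 / 2 : ℂ) • (y4 * y6)

/-- The genus 2 derivation `𝓛₁`. -/
noncomputable def L1 : Derivation ℂ (MvPolynomial (Fin 6) ℂ) (MvPolynomial (Fin 6) ℂ) :=
  mkDerivation ℂ ![x3, x4, 4 * (3 * x2 * x3 + y5), y5, y6, 4 * (2 * x2 * y5 + x3 * y4)]

/-- The genus 2 derivation `𝓛₃`. -/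
noncomputable def L3 : Derivation ℂ (MvPolynomial (Fin 6) ℂ) (MvPolynomial (Fin 6) ℂ) :=
  mkDerivation ℂ ![y5, y6, 4 * (2 * x2 * y5 + x3 * y4),
    x3 * y4 - x2 * y5, x4 * y4 - x2 * y6,
    8 * x2 * x3 * y4 - 8 * x2 ^ 2 * y5 + x4 * y5 - x3 * y6 + 4 * y4 * y5]

/-- The genus 2 derivation `𝓛₂`. -/
noncomputable def L2 : Derivation ℂ (MvPolynomial (Fin 6) ℂ) (MvPolynomial (Fin 6) ℂ) :=
  mkDerivation ℂ ![(8 / 5 : ℂ) • pl4 + 2 * x2 ^ 2 + 4 * y4,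
    3 * x2 * x3 + 5 * y5,
    2 * x2 * x4 + 3 * x3 ^ 2 + 6 * y6,
    -(4 / 5 : ℂ) • (pl4 * x2) + 2 * x2 * y4,
    -(4 / 5 : ℂ) • (pl4 * x3) + 3 * x3 * y4,
    -(4 / 5 : ℂ) • (pl4 * x4) + 4 * x4 * y4 + 3 * x3 * y5 - 2 * x2 * y6]

lemma L1_C (c : ℂ) : L1 (C c) = 0 := by
  rw [← MvPolynomial.algebraMap_eq]; exact Derivation.map_algebraMap _ c

lemma L1_ofNat (n : ℕ) [n.AtLeastTwo] :
    L1 (OfNat.ofNat n : MvPolynomial (Fin 6) ℂ) = 0 := by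
  rw [show (OfNat.ofNat n : MvPolynomial (Fin 6) ℂ) = C (OfNat.ofNat n) from
    (map_ofNat C n).symm]
  exact L1_C _

lemma L1_two : L1 (2 : MvPolynomial (Fin 6) ℂ) = 0 := L1_ofNat 2
lemma L1_three : L1 (3 : MvPolynomial (Fin 6) ℂ) = 0 := L1_ofNat 3
lemma L1_four : L1 (4 : MvPolynomial (Fin 6) ℂ) = 0 := L1_ofNat 4

lemma L1_x2 : L1 x2 = x3 := by rw [L1, mkDerivation_X]; rfl
lemma L1_x3 : L1 x3 = x4 := by rw [L1, mkDerivation_X]; rfl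
lemma L1_x4 : L1 x4 = 4 * (3 * x2 * x3 + y5) := by rw [L1, mkDerivation_X]; rfl
lemma L1_y4 : L1 y4 = y5 := by rw [L1, mkDerivation_X]; rfl
lemma L1_y5 : L1 y5 = y6 := by rw [L1, mkDerivation_X]; rfl
lemma L1_y6 : L1 y6 = 4 * (2 * x2 * y5 + x3 * y4) := by rw [L1, mkDerivation_X]; rfl

lemma h2C : (C (1 / 2 : ℂ) : MvPolynomial (Fin 6) ℂ) * 2 = 1 := by
  rw [show ((2 : MvPolynomial (Fin 6) ℂ)) = C 2 from (map_ofNat C 2).symm, ← map_mul]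
  norm_num

lemma hvcC : (C (1 / 4 : ℂ) : MvPolynomial (Fin 6) ℂ) * 2 = C (1 / 2 : ℂ) := by
  rw [show ((2 : MvPolynomial (Fin 6) ℂ)) = C 2 from (map_ofNat C 2).symm, ← map_mul]
  norm_num

/-- `𝓛₁` annihilates `λ₄, λ₆, λ₈, λ₁₀`. -/
theorem L1_annihilates_genus2 :
    L1 pl4 = 0 ∧ L1 pl6 = 0 ∧ L1 pl8 = 0 ∧ L1 pl10 = 0 := by
  refine ⟨?_, ?_, ?_, ?_⟩ <;>
    simp only [pl4, pl6, pl8, pl10, smul_eq_C_mul, map_add, map_sub, map_neg,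
      Derivation.leibniz, Derivation.leibniz_pow, L1_C, L1_ofNat, L1_two, L1_three, L1_four,
      L1_x2, L1_x3, L1_x4, L1_y4, L1_y5, L1_y6, smul_eq_mul, mul_zero, zero_mul,
      smul_zero, sub_zero, add_zero, zero_add]
  · linear_combination (x2 * x3 * 6 + y5 * 2) * h2C
  · linear_combination (x2 * y5 * 2 - x2 ^ 2 * x3 * 6 + x3 * y4 * 2) * h2C + x3 * x4 * hvcC
  · linear_combination (-(x2 * y4 * x3 * 8) - x2 ^ 2 * y5 * 4 - y4 * y5 * 2) * h2C
  · linear_combination (-(x2 * y4 * y5 * 4) - x3 * y4 ^ 2 * 2) * h2C + y5 * y6 * hvcC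
end

section
/- In genus 2, the derivation 𝓛₃ of ℂ[x₂, x₃, x₄, y₄, y₅, y₆] given by 𝓛₃(x₂)=y₅, 𝓛₃(x₃)=y₆, 𝓛₃(x₄)=4(2x₂y₅+x₃y₄), 𝓛₃(y₄)=x₃y₄-x₂y₅, 𝓛₃(y₅)=x₄y₄-x₂y₆, 𝓛₃(y₆)=8x₂x₃y₄-8x₂²y₅+x₄y₅-x₃y₆+4y₄y₅ annihilates the polynomials λ₄, λ₆, λ₈, λ₁₀ of the genus 2 polynomial map p. -/
set_option maxHeartbeats 1000000


open MvPolynomial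

/-- `𝓛₃` annihilates `λ₄, λ₆, λ₈, λ₁₀`. -/
theorem L3_annihilates_genus2 :
    L3 pl4 = 0 ∧ L3 pl6 = 0 ∧ L3 pl8 = 0 ∧ L3 pl10 = 0 := by
  have h0 : L3 x2 = y5 := by rw [show x2 = X 0 from rfl, L3, mkDerivation_X]; rfl
  have h1 : L3 x3 = y6 := by rw [show x3 = X 1 from rfl, L3, mkDerivation_X]; rfl
  have h2 : L3 x4 = 4 * (2 * x2 * y5 + x3 * y4) := by
    rw [show x4 = X 2 from rfl, L3, mkDerivation_X]; rfl
  have h3 : L3 y4 = x3 * y4 - x2 * y5 := by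
    rw [show y4 = X 3 from rfl, L3, mkDerivation_X]; rfl
  have h4 : L3 y5 = x4 * y4 - x2 * y6 := by
    rw [show y5 = X 4 from rfl, L3, mkDerivation_X]; rfl
  have h5 : L3 y6 = 8 * x2 * x3 * y4 - 8 * x2 ^ 2 * y5 + x4 * y5 - x3 * y6 + 4 * y4 * y5 := by
    rw [show y6 = X 5 from rfl, L3, mkDerivation_X]; rfl
  have key : ∀ p : MvPolynomial (Fin 6) ℂ, (4 : ℂ) • p = 0 → p = 0 := by
    intro p hp
    have h := congrArg (fun q => (1 / 4 : ℂ) • q) hp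
    simpa [smul_smul] using h
  refine ⟨key _ ?_, key _ ?_, key _ ?_, key _ ?_⟩ <;>
  · rw [← Derivation.map_smul]
    have e1 : (4 : ℂ) • pl4 = -12 * x2 ^ 2 + 2 * x4 - 8 * y4 := by
      simp only [pl4, smul_add, smul_sub, smul_smul]
      norm_num [smul_eq_C_mul, map_ofNat]
      ring
    have e2 : (4 : ℂ) • pl6 = 8 * x2 ^ 3 + x3 ^ 2 - 2 * (x2 * x4) - 8 * x2 * y4 + 2 * y6 := by
      simp only [pl6, smul_add, smul_sub, smul_smul]
      norm_num [smul_eq_C_mul, map_ofNat]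
      ring
    have e3 : (4 : ℂ) • pl8 =
        4 * ((4 * x2 ^ 2 + y4) * y4) - 2 * (x4 * y4 - x3 * y5 + x2 * y6) := by
      simp only [pl8, smul_add, smul_sub, smul_smul]
      norm_num [smul_eq_C_mul, map_ofNat]
      ring
    have e4 : (4 : ℂ) • pl10 = 8 * x2 * y4 ^ 2 + y5 ^ 2 - 2 * (y4 * y6) := by
      simp only [pl10, smul_add, smul_sub, smul_smul]
      norm_num [smul_eq_C_mul, map_ofNat]
      ring
    have hz : ∀ n : ℕ, L3 ((n : MvPolynomial (Fin 6) ℂ)) = 0 := fun n => L3.map_natCast n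
    have z2 : L3 2 = 0 := by rw [show (2 : MvPolynomial (Fin 6) ℂ) = ((2:ℕ):_) by norm_num]; exact hz 2
    have z4 : L3 4 = 0 := by rw [show (4 : MvPolynomial (Fin 6) ℂ) = ((4:ℕ):_) by norm_num]; exact hz 4
    have z8 : L3 8 = 0 := by rw [show (8 : MvPolynomial (Fin 6) ℂ) = ((8:ℕ):_) by norm_num]; exact hz 8
    have z12 : L3 12 = 0 := by rw [show (12 : MvPolynomial (Fin 6) ℂ) = ((12:ℕ):_) by norm_num]; exact hz 12
    have z16 : L3 16 = 0 := by rw [show (16 : MvPolynomial (Fin 6) ℂ) = ((16:ℕ):_) by norm_num]; exact hz 16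
    first | rw [e1] | rw [e2] | rw [e3] | rw [e4]
    simp only [map_add, map_sub, map_mul, map_neg, map_ofNat,
      Derivation.leibniz, Derivation.leibniz_pow, h0, h1, h2, h3, h4, h5,
      Derivation.map_one_eq_zero, z2, z4, z8, z12, z16, smul_zero, mul_zero, zero_mul, add_zero,
      zero_add, neg_zero, sub_zero, smul_eq_mul, nsmul_eq_mul, Nat.cast_ofNat]
    ring
end

section
/- The genus 2 derivations 𝓛₁ and 𝓛₃ of ℂ[x₂, x₃, x₄, y₄, y₅, y₆] commute: [𝓛₁, 𝓛₃] = 0. -/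
open MvPolynomial

@[simp] lemma vec6_zero {α : Type*} (a b c d e f : α) : ![a,b,c,d,e,f] 0 = a := rfl
@[simp] lemma vec6_one {α : Type*} (a b c d e f : α) : ![a,b,c,d,e,f] 1 = b := rfl
@[simp] lemma vec6_two {α : Type*} (a b c d e f : α) : ![a,b,c,d,e,f] 2 = c := rfl
@[simp] lemma vec6_three {α : Type*} (a b c d e f : α) : ![a,b,c,d,e,f] 3 = d := rfl
@[simp] lemma vec6_four {α : Type*} (a b c d e f : α) : ![a,b,c,d,e,f] 4 = e := rfl
@[simp] lemma vec6_five {α : Type*} (a b c d e f : α) : ![a,b,c,d,e,f] 5 = f := rfl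

@[simp] lemma Derivation.map_ofNat' {R A M : Type*} [CommSemiring R] [CommSemiring A]
    [Algebra R A] [AddCommMonoid M] [Module A M] [Module R M]
    (D : Derivation R A M) (n : ℕ) [n.AtLeastTwo] :
    D (no_index (OfNat.ofNat n)) = 0 := by
  rw [← Nat.cast_ofNat]; exact D.map_natCast _

/-- `[𝓛₁, 𝓛₃] = 0`. -/
theorem commutator_L1_L3_genus2 : ⁅L1, L3⁆ = 0 := by
  apply MvPolynomial.derivation_ext
  intro i
  fin_cases i <;>
  · show (⁅L1, L3⁆ : Derivation ℂ _ _) (X _) = (0 : Derivation ℂ _ _) (X _)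
    simp [Derivation.commutator_apply, L1, L3, mkDerivation_X]
    try ring
end
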